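/- arXiv:2310.03142 — 2 statements merged into one kernel-verified Lean document; each statement's English description precedes it below -/
import Mathlib

section
/- Fix a finite type K of workers and a worker k : K. Let W : ℝ, a : Finset K → ℝ, L : K → Finset K → ℝ, and r : Finset K → K → ℝ be given, where r S i = 0 whenever S.card ≤ 2. Suppose that for every S ⊆ Finset.univ with k ∈ S and S.card ≥ 2 the nested shuffling balance constraint holds: W * a (S.erase k) + (∑ i in Finset.univ \ S, r (insert i S) i) = (∑ j in S.erase k, L j S) + (∑ i in S.erase k, r S i). Then the total size of intermediate values needed by worker k equals the total size of coded content sent to worker k: ∑ over all S ⊆ Finset.univ with k ∈ S and S.card ≥ 2 of W * a (S.erase k) = ∑ over all such S of (∑ j in S.erase k, L j S). -/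
/-- Core identity (Proposition 1) of the heterogeneous CDC scheme: summing the
nested shuffling balance constraints over all worker subsets containing `k`
shows the total IV size needed by `k` equals the total coded content sent to `k`. -/
theorem cdc_needed_equals_sent {K : Type*} [Fintype K] [DecidableEq K] (k : K)
    (W : ℝ) (a : Finset K → ℝ) (L : K → Finset K → ℝ) (r : Finset K → K → ℝ)
    (hr : ∀ (S : Finset K) (i : K), S.card ≤ 2 → r S i = 0)
    (hbal : ∀ S : Finset K, k ∈ S → 2 ≤ S.card →
      W * a (S.erase k) + (∑ i ∈ Finset.univ \ S, r (insert i S) i)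
        = (∑ j ∈ S.erase k, L j S) + (∑ i ∈ S.erase k, r S i)) :
    ∑ S ∈ Finset.univ.powerset.filter (fun S => k ∈ S ∧ 2 ≤ S.card),
        W * a (S.erase k)
      = ∑ S ∈ Finset.univ.powerset.filter (fun S => k ∈ S ∧ 2 ≤ S.card),
          ∑ j ∈ S.erase k, L j S := by
  classical
  set F := Finset.univ.powerset.filter (fun S : Finset K => k ∈ S ∧ 2 ≤ S.card) with hF
  set F2 := Finset.univ.powerset.filter (fun S : Finset K => k ∈ S ∧ 3 ≤ S.card) with hF2
  have hsub : F2 ⊆ F := by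
    intro S hS
    simp only [hF, hF2, Finset.mem_filter] at *
    exact ⟨hS.1, hS.2.1, le_trans (by norm_num) hS.2.2⟩
  have hB : ∑ S ∈ F2, ∑ i ∈ S.erase k, r S i = ∑ S ∈ F, ∑ i ∈ S.erase k, r S i := by
    refine Finset.sum_subset hsub ?_
    intro S hS hS2
    simp only [hF, hF2, Finset.mem_filter] at hS hS2
    have hc : S.card ≤ 2 := by
      by_contra h
      exact hS2 ⟨hS.1, hS.2.1, by omega⟩
    exact Finset.sum_eq_zero fun i _ => hr S i hc
  have key : ∑ S ∈ F, (∑ i ∈ Finset.univ \ S, r (insert i S) i)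
      = ∑ S ∈ F, ∑ i ∈ S.erase k, r S i := by
    rw [← hB, Finset.sum_sigma' F, Finset.sum_sigma' F2]
    refine Finset.sum_nbij' (fun p => ⟨insert p.2 p.1, p.2⟩) (fun p => ⟨p.1.erase p.2, p.2⟩)
      ?_ ?_ ?_ ?_ ?_
    · rintro ⟨S, i⟩ hp
      simp only [hF, hF2, Finset.mem_sigma, Finset.mem_filter, Finset.mem_sdiff,
        Finset.mem_univ, true_and, Finset.mem_powerset] at hp ⊢
      obtain ⟨⟨-, hk, hc⟩, hi⟩ := hp
      have hik : i ≠ k := fun h => hi (h ▸ hk)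
      refine ⟨⟨Finset.subset_univ _, Finset.mem_insert_of_mem hk, ?_⟩,
        Finset.mem_erase.mpr ⟨hik, Finset.mem_insert_self _ _⟩⟩
      rw [Finset.card_insert_of_notMem hi]; omega
    · rintro ⟨S, i⟩ hp
      simp only [hF, hF2, Finset.mem_sigma, Finset.mem_filter, Finset.mem_sdiff,
        Finset.mem_univ, true_and, Finset.mem_powerset] at hp ⊢
      obtain ⟨⟨-, hk, hc⟩, hi⟩ := hp
      obtain ⟨hik, hiS⟩ := Finset.mem_erase.mp hi
      refine ⟨⟨Finset.subset_univ _, Finset.mem_erase.mpr ⟨fun h => hik h.symm, hk⟩, ?_⟩,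
        Finset.notMem_erase _ _⟩
      rw [Finset.card_erase_of_mem hiS]; omega
    · rintro ⟨S, i⟩ hp
      simp only [hF, Finset.mem_sigma, Finset.mem_filter, Finset.mem_sdiff,
        Finset.mem_univ, true_and] at hp
      simp [Finset.erase_insert hp.2]
    · rintro ⟨S, i⟩ hp
      simp only [hF2, Finset.mem_sigma, Finset.mem_filter] at hp
      have hiS : i ∈ S := Finset.mem_of_mem_erase hp.2
      simp [Finset.insert_erase hiS]
    · rintro ⟨S, i⟩ _
      rfl
  have h1 : ∑ S ∈ F, (W * a (S.erase k) + ∑ i ∈ Finset.univ \ S, r (insert i S) i)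
      = ∑ S ∈ F, ((∑ j ∈ S.erase k, L j S) + ∑ i ∈ S.erase k, r S i) := by
    refine Finset.sum_congr rfl fun S hS => ?_
    simp only [hF, Finset.mem_filter] at hS
    exact hbal S hS.2.1 hS.2.2
  rw [Finset.sum_add_distrib, Finset.sum_add_distrib, key] at h1
  linarith
end

section
/- Let K be a finite type with at least 2 elements. For any W : K → ℝ with W k ≥ 0 for all k, and any a : Finset K → ℝ with a S ≥ 0 for all S, there exist functions L : K → Finset K → ℝ and r : K → Finset K → K → ℝ with L j S ≥ 0 and r k S i ≥ 0 everywhere, and r k S i = 0 whenever S.card ≤ 2, such that for every worker k and every S ⊆ Finset.univ with k ∈ S and S.card ≥ 2: W k * a (S.erase k) + (∑ i in Finset.univ \ S, r k (insert i S) i) = (∑ j in S.erase k, L j S) + (∑ i in S.erase k, r k S i). -/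
/-!
Work through the subsets from the largest down. Let `F k S` be the load worker `k` still has to
receive inside `S`: its own demand `W k * a (S \ {k})` plus whatever the supersets `S ∪ {i}` deferred
to `S`. If `|S| ≥ 3`, worker `k` defers `F k S` in equal shares `F k S / (|S| - 1)` to the subsets
`S \ {i}`, `i ≠ k`; seen from `S`, each superset `S ∪ {i}` hands down `F k (S ∪ {i}) / |S|`, which is
the recursion defining `F`. If `|S| = 2` nothing can be deferred, and the other worker `j` of `S`
sends `L j S = F k S`. Everything is nonnegative since the recursion only adds and divides
nonnegative quantities.
-/

open Finset

theorem Finset.sum_erase_sum_erase_of_card_eq_two {K M : Type*} [DecidableEq K]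
    [AddCommMonoid M] {S : Finset K} (hS : #S = 2) {k : K} (hk : k ∈ S) (f : K → M) :
    ∑ j ∈ S.erase k, ∑ l ∈ S.erase j, f l = f k := by
  obtain ⟨x, y, hxy, rfl⟩ := card_eq_two.1 hS
  rcases mem_insert.1 hk with rfl | hk
  · simp [hxy, erase_insert_of_ne hxy]
  · rw [mem_singleton.1 hk]
    simp [hxy, erase_insert_of_ne hxy]

section Cascade

variable {K : Type*} [Fintype K] [DecidableEq K]

noncomputable def cascade (c : Finset K → ℝ) (S : Finset K) : ℝ :=
  c S + ∑ i ∈ (univ \ S).attach, cascade c (insert i.1 S) / #S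
termination_by Fintype.card K - #S
decreasing_by
  have := card_le_univ (insert i.1 S)
  rw [card_insert_of_notMem (mem_sdiff.1 i.2).2] at this ⊢
  omega

theorem cascade_eq (c : Finset K → ℝ) (S : Finset K) :
    cascade c S = c S + ∑ i ∈ univ \ S, cascade c (insert i S) / #S := by
  rw [cascade, sum_attach (univ \ S) fun i => cascade c (insert i S) / #S]

theorem cascade_nonneg {c : Finset K → ℝ} (hc : ∀ S, 0 ≤ c S) (S : Finset K) :
    0 ≤ cascade c S := by
  fun_induction cascade c S with
  | case1 S ih => exact add_nonneg (hc S) (sum_nonneg fun i _ => div_nonneg (ih i) (by positivity))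

end Cascade

section Loads

variable {K : Type*} (F : K → Finset K → ℝ)

noncomputable def codedLoad [DecidableEq K] (j : K) (S : Finset K) : ℝ :=
  if #S = 2 then ∑ k ∈ S.erase j, F k S else 0

noncomputable def residualLoad (k : K) (S : Finset K) (_ : K) : ℝ :=
  if 3 ≤ #S then F k S / (#S - 1 : ℕ) else 0

variable {F}

theorem codedLoad_nonneg [DecidableEq K] (hF : ∀ k S, 0 ≤ F k S) (j : K) (S : Finset K) :
    0 ≤ codedLoad F j S := by
  unfold codedLoad
  split_ifs
  exacts [sum_nonneg fun k _ => hF k S, le_rfl]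

theorem residualLoad_nonneg (hF : ∀ k S, 0 ≤ F k S) (k : K) (S : Finset K) (i : K) :
    0 ≤ residualLoad F k S i := by
  unfold residualLoad
  split_ifs
  exacts [div_nonneg (hF k S) (Nat.cast_nonneg _), le_rfl]

theorem residualLoad_of_card_le_two {S : Finset K} (hS : #S ≤ 2) (k i : K) :
    residualLoad F k S i = 0 :=
  if_neg (by omega)

theorem residualLoad_insert [DecidableEq K] {S : Finset K} (hS : 2 ≤ #S) {i : K} (hi : i ∉ S)
    (k : K) :
    residualLoad F k (insert i S) i = F k (insert i S) / #S := by
  rw [residualLoad, card_insert_of_notMem hi, if_pos (by omega), Nat.add_sub_cancel]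

theorem sum_codedLoad_erase [DecidableEq K] {S : Finset K} {k : K} (hk : k ∈ S) :
    ∑ j ∈ S.erase k, codedLoad F j S = if #S = 2 then F k S else 0 := by
  unfold codedLoad
  split_ifs with hS
  · exact sum_erase_sum_erase_of_card_eq_two hS hk (F · S)
  · exact sum_const_zero

theorem sum_residualLoad_erase [DecidableEq K] {S : Finset K} {k : K} (hk : k ∈ S) :
    ∑ i ∈ S.erase k, residualLoad F k S i = if 3 ≤ #S then F k S else 0 := by
  unfold residualLoad
  split_ifs with hS
  · rw [sum_const, card_erase_of_mem hk, nsmul_eq_mul,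
      mul_div_cancel₀ _ (Nat.cast_ne_zero.2 (by omega))]
  · exact sum_const_zero

end Loads

theorem cdc_feasible_general {K : Type*} [Fintype K] [DecidableEq K]
    (W : K → ℝ) (hW : ∀ k, 0 ≤ W k)
    (a : Finset K → ℝ) (ha : ∀ S, 0 ≤ a S) :
    ∃ (L : K → Finset K → ℝ) (r : K → Finset K → K → ℝ),
      (∀ j S, 0 ≤ L j S) ∧ (∀ k S i, 0 ≤ r k S i) ∧
      (∀ k (S : Finset K) i, S.card ≤ 2 → r k S i = 0) ∧
      (∀ (k : K) (S : Finset K), k ∈ S → 2 ≤ S.card →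
        W k * a (S.erase k) + (∑ i ∈ Finset.univ \ S, r k (insert i S) i)
          = (∑ j ∈ S.erase k, L j S) + (∑ i ∈ S.erase k, r k S i)) := by
  set F : K → Finset K → ℝ := fun k => cascade fun S => W k * a (S.erase k)
  have hF : ∀ k S, 0 ≤ F k S := fun k => cascade_nonneg fun S => mul_nonneg (hW k) (ha _)
  refine ⟨codedLoad F, residualLoad F, codedLoad_nonneg hF, residualLoad_nonneg hF,
    fun k S i hS => residualLoad_of_card_le_two hS k i, fun k S hk hS => ?_⟩
  have hdeferred : W k * a (S.erase k) + ∑ i ∈ univ \ S, residualLoad F k (insert i S) i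
      = F k S := by
    show _ = cascade _ S
    rw [cascade_eq]
    congr 1
    exact sum_congr rfl fun i hi => residualLoad_insert hS (mem_sdiff.1 hi).2 k
  rw [hdeferred, sum_codedLoad_erase hk, sum_residualLoad_erase hk]
  rcases hS.eq_or_lt with hS | hS
  · rw [if_pos hS.symm, if_neg (by omega), add_zero]
  · rw [if_neg hS.ne', if_pos (Nat.succ_le_of_lt hS), zero_add]

/-- Feasibility of the nested coded shuffling strategy (proof of Proposition 1):
for any file placement there exist nonnegative design variables `L` and `r`
(with `r` vanishing on subsets of size at most 2) satisfying all the balance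
constraints. -/
theorem cdc_feasible {K : Type*} [Fintype K] [DecidableEq K]
    (hK : 2 ≤ Fintype.card K)
    (W : K → ℝ) (hW : ∀ k, 0 ≤ W k)
    (a : Finset K → ℝ) (ha : ∀ S, 0 ≤ a S) :
    ∃ (L : K → Finset K → ℝ) (r : K → Finset K → K → ℝ),
      (∀ j S, 0 ≤ L j S) ∧ (∀ k S i, 0 ≤ r k S i) ∧
      (∀ k (S : Finset K) i, S.card ≤ 2 → r k S i = 0) ∧
      (∀ (k : K) (S : Finset K), k ∈ S → 2 ≤ S.card →
        W k * a (S.erase k) + (∑ i ∈ Finset.univ \ S, r k (insert i S) i)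
          = (∑ j ∈ S.erase k, L j S) + (∑ i ∈ S.erase k, r k S i)) :=
  cdc_feasible_general W hW a ha
end
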